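/- Given four Vandermonde kernels ker P₁^B, ..., ker P₄^B ⊂ C^{v+1} on pairwise disjoint node sets of sizes k₁, k₂, k₃, k₄ ≤ v, the set (⋂_{j≠i} ker Pⱼ^B) \ ker Pᵢ^B is nonempty for each i = 1,...,4 if and only if k_α + k_β + k_γ ≤ v for all distinct α, β, γ ∈ {1,2,3,4}. -/
import Mathlib


/-!
STATEMENT 13. Given four Vandermonde kernels `ker Pᵢᴮ ⊂ ℂ^{v+1}` on pairwise
disjoint node sets of sizes `k₁, k₂, k₃, k₄ ≤ v`, the set
`(⋂_{j≠i} ker Pⱼᴮ) \ ker Pᵢᴮ` is nonempty for each `i` iff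
`k_α + k_β + k_γ ≤ v` for all distinct `α, β, γ`.
-/

open Polynomial Matrix Finset

private lemma eval_sum_poly {v : ℕ} (x : Fin (v + 1) → ℂ) (z : ℂ) :
    (∑ l : Fin (v + 1), Polynomial.C (x l) * Polynomial.X ^ (l : ℕ)).eval z
      = ∑ l : Fin (v + 1), x l * z ^ (l : ℕ) := by
  simp [Polynomial.eval_finset_sum]

private lemma mulVec_eq_eval' {v m : ℕ} (t : Fin m → ℂ) (x : Fin (v + 1) → ℂ) (a : Fin m) :
    (Matrix.of fun (a : Fin m) (l : Fin (v + 1)) => t a ^ (l : ℕ)).mulVec x a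
      = (∑ l : Fin (v + 1), Polynomial.C (x l) * Polynomial.X ^ (l : ℕ)).eval (t a) := by
  rw [Matrix.mulVec, dotProduct, eval_sum_poly]
  simp [mul_comm]

private lemma coeff_vec_eval {v : ℕ} (p : ℂ[X]) (hp : p.natDegree ≤ v) (z : ℂ) :
    ∑ l : Fin (v + 1), p.coeff (l : ℕ) * z ^ (l : ℕ) = p.eval z := by
  rw [Polynomial.eval_eq_sum_range' (Nat.lt_succ_of_le hp)]
  exact Fin.sum_univ_eq_sum_range (fun i => p.coeff i * z ^ i) (v + 1)

private lemma mulVec_coeff_eq_eval {v m : ℕ} (t : Fin m → ℂ) (p : ℂ[X])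
    (hp : p.natDegree ≤ v) (a : Fin m) :
    (Matrix.of fun (a : Fin m) (l : Fin (v + 1)) => t a ^ (l : ℕ)).mulVec
      (fun l => p.coeff (l : ℕ)) a = p.eval (t a) := by
  rw [Matrix.mulVec, dotProduct, ← coeff_vec_eval p hp (t a)]
  simp [mul_comm]

private lemma erase_triple {i : Fin 4} :
    ∃ α β γ : Fin 4, α ≠ β ∧ α ≠ γ ∧ β ≠ γ ∧
      (Finset.univ.erase i : Finset (Fin 4)) = {α, β, γ} := by
  have hcard : (Finset.univ.erase i : Finset (Fin 4)).card = 3 := by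
    rw [Finset.card_erase_of_mem (Finset.mem_univ i)]; rfl
  rw [Finset.card_eq_three] at hcard
  obtain ⟨a, b, c, hab, hac, hbc, he⟩ := hcard
  exact ⟨a, b, c, hab, hac, hbc, he⟩

theorem vandermonde_kernel_intersections_nonempty_iff (v : ℕ)
    (k : Fin 4 → ℕ) (hk : ∀ i, 0 < k i ∧ k i ≤ v)
    (s : (i : Fin 4) → Fin (k i) → ℂ)
    (hnodes : Function.Injective
      (fun p : (Σ i : Fin 4, Fin (k i)) => s p.1 p.2)) :
    (∀ i : Fin 4,
      (((⨅ j ∈ Finset.univ.erase i,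
          LinearMap.ker (Matrix.mulVecLin
            (Matrix.of fun (a : Fin (k j)) (l : Fin (v + 1)) => s j a ^ (l : ℕ)))) :
        Submodule ℂ (Fin (v + 1) → ℂ)) : Set (Fin (v + 1) → ℂ)) \
        ((LinearMap.ker (Matrix.mulVecLin
            (Matrix.of fun (a : Fin (k i)) (l : Fin (v + 1)) => s i a ^ (l : ℕ))) :
          Submodule ℂ (Fin (v + 1) → ℂ)) : Set (Fin (v + 1) → ℂ)) |>.Nonempty) ↔
    (∀ α β γ : Fin 4, α ≠ β → β ≠ γ → α ≠ γ → k α + k β + k γ ≤ v) := by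
  constructor
  · -- forward: nonemptiness → triple sums bounded
    intro h α β γ hαβ hβγ hαγ
    -- find the fourth index
    obtain ⟨i, hiα, hiβ, hiγ⟩ : ∃ i : Fin 4, i ≠ α ∧ i ≠ β ∧ i ≠ γ := by
      revert hαβ hβγ hαγ; revert α β γ; decide
    obtain ⟨x, hx_in, hx_nin⟩ := h i
    -- build the polynomial from x
    set p : ℂ[X] := ∑ l : Fin (v + 1), Polynomial.C (x l) * Polynomial.X ^ (l : ℕ) with hp
    have hdeg : p.natDegree ≤ v := by
      apply Polynomial.natDegree_sum_le_of_forall_le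
      intro l _
      calc (Polynomial.C (x l) * Polynomial.X ^ (l : ℕ)).natDegree ≤ (l : ℕ) :=
            le_trans (Polynomial.natDegree_C_mul_le (x l) (Polynomial.X ^ (l : ℕ)))
              (le_of_eq (Polynomial.natDegree_X_pow _))
        _ ≤ v := Nat.lt_succ_iff.mp l.isLt
    -- x ∉ ker i : p nonzero
    have hpne : p ≠ 0 := by
      intro hp0
      apply hx_nin
      simp only [SetLike.mem_coe, LinearMap.mem_ker, Matrix.mulVecLin_apply]
      funext a
      rw [Pi.zero_apply, mulVec_eq_eval' (s i) x a, ← hp, hp0, Polynomial.eval_zero]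
    -- roots from the other three kernels
    have hroot : ∀ j ∈ Finset.univ.erase i, ∀ b : Fin (k j), p.eval (s j b) = 0 := by
      intro j hj b
      have hx_in' : x ∈ (⨅ j ∈ Finset.univ.erase i,
          LinearMap.ker (Matrix.mulVecLin
            (Matrix.of fun (a : Fin (k j)) (l : Fin (v + 1)) => s j a ^ (l : ℕ)))) := hx_in
      rw [Submodule.mem_iInf] at hx_in'
      have := hx_in' j
      rw [Submodule.mem_iInf] at this
      have hker := this hj
      rw [LinearMap.mem_ker, Matrix.mulVecLin_apply] at hker
      have := congrFun hker b
      rw [Pi.zero_apply, mulVec_eq_eval' (s j) x b] at this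
      rw [← hp] at this
      exact this
    -- the finset of roots
    set S : Finset (Σ j : Fin 4, Fin (k j)) :=
      (Finset.univ.erase i).sigma (fun j => (Finset.univ : Finset (Fin (k j)))) with hS
    set T : Finset ℂ := S.image (fun q => s q.1 q.2) with hT
    have hTcard : T.card = S.card := by
      rw [hT]
      apply Finset.card_image_of_injOn
      exact fun a _ b _ hab => hnodes hab
    have hScard : S.card = ∑ j ∈ Finset.univ.erase i, k j := by
      rw [hS, Finset.card_sigma]
      simp
    have hTsub : T ⊆ p.roots.toFinset := by
      intro z hz
      rw [hT, Finset.mem_image] at hz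
      obtain ⟨q, hq, rfl⟩ := hz
      rw [Multiset.mem_toFinset, Polynomial.mem_roots hpne]
      rw [hS, Finset.mem_sigma] at hq
      exact hroot q.1 hq.1 q.2
    have hsum_le : ∑ j ∈ Finset.univ.erase i, k j ≤ v := by
      calc ∑ j ∈ Finset.univ.erase i, k j = T.card := by rw [hTcard, hScard]
        _ ≤ p.roots.toFinset.card := Finset.card_le_card hTsub
        _ ≤ Multiset.card p.roots := Multiset.toFinset_card_le _
        _ ≤ p.natDegree := Polynomial.card_roots' p
        _ ≤ v := hdeg
    -- k α + k β + k γ = sum over erase i ⊇ {α, β, γ}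
    refine le_trans ?_ hsum_le
    have hsub : ({α, β, γ} : Finset (Fin 4)) ⊆ Finset.univ.erase i := by
      intro z hz
      simp only [Finset.mem_insert, Finset.mem_singleton] at hz
      rcases hz with rfl | rfl | rfl
      · exact Finset.mem_erase.mpr ⟨hiα.symm, Finset.mem_univ _⟩
      · exact Finset.mem_erase.mpr ⟨hiβ.symm, Finset.mem_univ _⟩
      · exact Finset.mem_erase.mpr ⟨hiγ.symm, Finset.mem_univ _⟩
    calc k α + k β + k γ = ∑ j ∈ ({α, β, γ} : Finset (Fin 4)), k j := by
          rw [Finset.sum_insert (by simp [hαβ, hαγ]),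
            Finset.sum_insert (by simp [hβγ]), Finset.sum_singleton, add_assoc]
      _ ≤ ∑ j ∈ Finset.univ.erase i, k j := Finset.sum_le_sum_of_subset hsub
  · -- backward: construct the witness polynomial
    intro h i
    have hsum : ∑ j ∈ Finset.univ.erase i, k j ≤ v := by
      obtain ⟨α, β, γ, hαβ, hαγ, hβγ, he⟩ := erase_triple (i := i)
      rw [he, Finset.sum_insert (by simp [hαβ, hαγ]),
        Finset.sum_insert (by simp [hβγ]), Finset.sum_singleton]
      have := h α β γ hαβ hβγ hαγ
      omega
    set p : ℂ[X] := ∏ j ∈ Finset.univ.erase i, ∏ b : Fin (k j),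
      (Polynomial.X - Polynomial.C (s j b)) with hp
    have hinner_deg : ∀ j : Fin 4,
        (∏ b : Fin (k j), (Polynomial.X - Polynomial.C (s j b))).natDegree = k j := by
      intro j
      rw [Polynomial.natDegree_prod _ _ (fun b _ => Polynomial.X_sub_C_ne_zero (s j b))]
      simp
    have hinner_ne : ∀ j : Fin 4,
        (∏ b : Fin (k j), (Polynomial.X - Polynomial.C (s j b))) ≠ 0 := by
      intro j
      exact Finset.prod_ne_zero_iff.mpr (fun b _ => Polynomial.X_sub_C_ne_zero (s j b))
    have hdeg : p.natDegree ≤ v := by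
      rw [hp, Polynomial.natDegree_prod _ _ (fun j _ => hinner_ne j)]
      calc ∑ j ∈ Finset.univ.erase i,
            (∏ b : Fin (k j), (Polynomial.X - Polynomial.C (s j b))).natDegree
          = ∑ j ∈ Finset.univ.erase i, k j := Finset.sum_congr rfl (fun j _ => hinner_deg j)
        _ ≤ v := hsum
    refine ⟨fun l => p.coeff (l : ℕ), ?_, ?_⟩
    · -- in the intersection
      simp only [SetLike.mem_coe]
      rw [Submodule.mem_iInf]
      intro j
      rw [Submodule.mem_iInf]
      intro hj
      rw [LinearMap.mem_ker, Matrix.mulVecLin_apply]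
      funext b
      rw [Pi.zero_apply, mulVec_coeff_eq_eval (s j) p hdeg b, hp,
        Polynomial.eval_prod]
      apply Finset.prod_eq_zero hj
      rw [Polynomial.eval_prod]
      apply Finset.prod_eq_zero (Finset.mem_univ b)
      simp
    · -- not in ker i
      intro hmem
      simp only [SetLike.mem_coe, LinearMap.mem_ker, Matrix.mulVecLin_apply] at hmem
      obtain ⟨a⟩ : Nonempty (Fin (k i)) := ⟨⟨0, (hk i).1⟩⟩
      have := congrFun hmem a
      rw [Pi.zero_apply, mulVec_coeff_eq_eval (s i) p hdeg a] at this
      rw [hp] at this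
      simp only [Polynomial.eval_prod, Polynomial.eval_sub, Polynomial.eval_X,
        Polynomial.eval_C] at this
      rw [Finset.prod_eq_zero_iff] at this
      obtain ⟨j, hj, hj0⟩ := this
      rw [Finset.prod_eq_zero_iff] at hj0
      obtain ⟨b, _, hb0⟩ := hj0
      have hji : j ≠ i := (Finset.mem_erase.mp hj).1
      have : s i a = s j b := by linear_combination hb0
      have := hnodes (a₁ := ⟨i, a⟩) (a₂ := ⟨j, b⟩) this
      exact hji (congrArg Sigma.fst this).symm
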